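/- Let ρ ≥ 1. Then H_N/N → 1 in probability as N → ∞; that is, for every ε > 0, ∑_{k ∈ {1,…,N}, |k/N − 1| ≥ ε} P(H_N = k) → 0 as N → ∞. -/

import Mathlib

open Finset Filter Real Topology

/-- `r_{ρ,n}(i) = ρ^{-i} * C(n-1, i)^{-1}`. -/
noncomputable def rfun (ρ : ℝ) (n i : ℕ) : ℝ := (ρ ^ i * (Nat.choose (n - 1) i : ℝ))⁻¹

/-- `P(H_N ≥ k)` for `k = 1,…,N`, and `0` for `k > N`. -/
noncomputable def tailP (ρ : ℝ) (N k : ℕ) : ℝ :=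
  if k ≤ N then (∑ i ∈ Finset.range k, rfun ρ N i)⁻¹ else 0

/-- `P(H_N = k) = P(H_N ≥ k) − P(H_N ≥ k+1)`. -/
noncomputable def pmfP (ρ : ℝ) (N k : ℕ) : ℝ := tailP ρ N k - tailP ρ N (k + 1)

/-- `E(H_N) = ∑_{k=1}^N P(H_N ≥ k)`. -/
noncomputable def EH (ρ : ℝ) (N : ℕ) : ℝ := ∑ k ∈ Finset.Icc 1 N, tailP ρ N k

/-- `Var(H_N) = ∑_{k=1}^N (k − E(H_N))² P(H_N = k)`. -/
noncomputable def VarH (ρ : ℝ) (N : ℕ) : ℝ :=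
  ∑ k ∈ Finset.Icc 1 N, ((k : ℝ) - EH ρ N) ^ 2 * pmfP ρ N k

/-- `P(H_N ≤ t)` for a real threshold `t`. -/
noncomputable def cdfP (ρ : ℝ) (N : ℕ) (t : ℝ) : ℝ :=
  ∑ k ∈ (Finset.Icc 1 N).filter (fun k : ℕ => (k : ℝ) ≤ t), pmfP ρ N k

/-! The event `|H_N / N - 1| ≥ ε` is `{H_N ≤ m}` with `m = ⌊(1 - ε) N⌋`, and `m ≤ N - 3` once
`ε N ≥ 3`. Telescoping gives `P(H_N ≤ m) = 1 - 1 / (1 + s) ≤ s` with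
`s = ∑_{i=1}^m ρ^{-i} / C(N-1, i)`. For `ρ ≥ 1` this is at most `∑_{i=1}^{N-3} 1 / C(N-1, i)`,
whose first term is `1 / (N-1)` while the others are at most `1 / C(N-1, 2)`; hence
`s ≤ 3 / (N-1) → 0`. -/

theorem Nat.choose_le_choose_right_of_le_half {n r s : ℕ} (hrs : r ≤ s) (hs : s ≤ n / 2) :
    n.choose r ≤ n.choose s := by
  induction s, hrs using Nat.le_induction with
  | base => rfl
  | succ k _ ih => exact (ih (by omega)).trans (Nat.choose_le_succ_of_lt_half_left (by omega))

theorem Nat.choose_two_le_choose {n i : ℕ} (h2 : 2 ≤ i) (hi : i + 2 ≤ n) :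
    n.choose 2 ≤ n.choose i := by
  rcases le_or_gt i (n / 2) with h | h
  · exact Nat.choose_le_choose_right_of_le_half h2 h
  · rw [← Nat.choose_symm (by omega : i ≤ n)]
    exact Nat.choose_le_choose_right_of_le_half (by omega) (by omega)

theorem sum_Icc_inv_choose_le (n : ℕ) :
    ∑ i ∈ Icc 1 (n - 2), (n.choose i : ℝ)⁻¹ ≤ 3 / n := by
  rcases lt_or_ge n 3 with hn | hn
  · rw [Icc_eq_empty (by omega), sum_empty]
    positivity
  have hnR : (3 : ℝ) ≤ n := by exact_mod_cast hn
  have hn1 : (0 : ℝ) < n - 1 := by linarith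
  have hmiddle : ∀ i ∈ Ioc 1 (n - 2), (n.choose i : ℝ)⁻¹ ≤ 2 / (n * (n - 1)) := by
    intro i hi
    obtain ⟨hi2, hin⟩ := mem_Ioc.mp hi
    have hle : (n.choose 2 : ℝ) ≤ n.choose i := by
      exact_mod_cast Nat.choose_two_le_choose hi2 (by omega)
    rw [Nat.cast_choose_two] at hle
    calc (n.choose i : ℝ)⁻¹ ≤ (n * (n - 1) / 2 : ℝ)⁻¹ :=
          inv_anti₀ (by nlinarith) hle
      _ = 2 / (n * (n - 1)) := by rw [inv_div]
  rw [Icc_eq_cons_Ioc (by omega), sum_cons, Nat.choose_one_right]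
  calc (n : ℝ)⁻¹ + ∑ i ∈ Ioc 1 (n - 2), (n.choose i : ℝ)⁻¹
      ≤ (n : ℝ)⁻¹ + (n - 1) * (2 / (n * (n - 1))) := by
        gcongr
        refine (sum_le_card_nsmul _ _ _ hmiddle).trans ?_
        rw [nsmul_eq_mul, Nat.card_Ioc]
        have : ((n - 2 - 1 : ℕ) : ℝ) ≤ n - 1 := by
          have hcard : n - 2 - 1 + 3 = n := by omega
          have hcast : ((n - 2 - 1 : ℕ) : ℝ) + 3 = n := by exact_mod_cast hcard
          linarith
        gcongr
    _ = 3 / n := by field_simp; norm_num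

theorem rfun_nonneg {ρ : ℝ} (hρ : 0 ≤ ρ) (n i : ℕ) : 0 ≤ rfun ρ n i := by
  unfold rfun; positivity

theorem rfun_le_inv_choose {ρ : ℝ} (hρ : 1 ≤ ρ) (n i : ℕ) :
    rfun ρ n i ≤ ((n - 1).choose i : ℝ)⁻¹ := by
  rw [rfun, mul_inv]
  exact mul_le_of_le_one_left (by positivity) (inv_le_one_of_one_le₀ (one_le_pow₀ hρ))

theorem sum_range_succ_rfun (ρ : ℝ) (n m : ℕ) :
    ∑ i ∈ range (m + 1), rfun ρ n i = 1 + ∑ i ∈ Icc 1 m, rfun ρ n i := by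
  rw [range_eq_Ico, sum_eq_sum_Ico_succ_bot (by omega : 0 < m + 1), zero_add,
    Ico_add_one_right_eq_Icc]
  simp [rfun]

theorem sum_Icc_pmfP {ρ : ℝ} {N m : ℕ} (hm : m < N) :
    ∑ k ∈ Icc 1 m, pmfP ρ N k = 1 - (1 + ∑ i ∈ Icc 1 m, rfun ρ N i)⁻¹ := by
  have htel : ∑ k ∈ Icc 1 m, pmfP ρ N k = tailP ρ N 1 - tailP ρ N (m + 1) := by
    rw [← Ico_add_one_right_eq_Icc, ← neg_sub, ← sum_Ico_sub _ (by omega), ← sum_neg_distrib]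
    simp only [pmfP, neg_sub]
  rw [htel, tailP, tailP, if_pos (by omega), if_pos (by omega : m + 1 ≤ N),
    sum_range_succ_rfun ρ N m]
  simp [rfun]

theorem sum_Icc_pmfP_mem_Icc {ρ : ℝ} (hρ : 1 ≤ ρ) {N m : ℕ} (hm : m + 3 ≤ N) :
    ∑ k ∈ Icc 1 m, pmfP ρ N k ∈ Set.Icc (0 : ℝ) (3 / (N - 1 : ℕ)) := by
  rw [sum_Icc_pmfP (by omega)]
  set s := ∑ i ∈ Icc 1 m, rfun ρ N i
  have hρ0 : 0 ≤ ρ := zero_le_one.trans hρ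
  have hs : 0 ≤ s := sum_nonneg fun i _ => rfun_nonneg hρ0 N i
  have hsN : s ≤ 3 / (N - 1 : ℕ) :=
    calc s ≤ ∑ i ∈ Icc 1 (N - 1 - 2), rfun ρ N i :=
          sum_le_sum_of_subset_of_nonneg (Icc_subset_Icc_right (by omega))
            fun i _ _ => rfun_nonneg hρ0 N i
      _ ≤ ∑ i ∈ Icc 1 (N - 1 - 2), ((N - 1).choose i : ℝ)⁻¹ :=
          sum_le_sum fun i _ => rfun_le_inv_choose hρ N i
      _ ≤ 3 / (N - 1 : ℕ) := sum_Icc_inv_choose_le (N - 1)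
  have hs1 : (0 : ℝ) < 1 + s := by linarith
  have heq : 1 - (1 + s)⁻¹ = s / (1 + s) := by field_simp; ring
  rw [heq]
  exact ⟨div_nonneg hs hs1.le, (div_le_self hs (by linarith)).trans hsN⟩

theorem filter_le_abs_div_sub_one_eq_Icc {ε : ℝ} (hε : 0 ≤ ε) (N : ℕ) :
    (Icc 1 N).filter (fun k : ℕ => ε ≤ |(k : ℝ) / N - 1|) = Icc 1 ⌊(1 - ε) * N⌋₊ := by
  ext k
  simp only [mem_filter, mem_Icc]
  constructor
  · rintro ⟨⟨hk1, hkN⟩, hdev⟩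
    have hN : (0 : ℝ) < N := by exact_mod_cast (by omega : 0 < N)
    have hkN' : (k : ℝ) ≤ N := by exact_mod_cast hkN
    rw [abs_sub_comm, abs_of_nonneg (by rw [sub_nonneg, div_le_one hN]; exact hkN'),
      one_sub_div hN.ne', le_div_iff₀ hN] at hdev
    exact ⟨hk1, (Nat.le_floor_iff' (by omega)).2 (by linarith)⟩
  · rintro ⟨hk1, hkm⟩
    have hk : (k : ℝ) ≤ (1 - ε) * N := (Nat.le_floor_iff' (by omega)).1 hkm
    have hN : (0 : ℝ) < N := by
      have : (1 : ℝ) ≤ k := by exact_mod_cast hk1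
      nlinarith
    have hkN : (k : ℝ) ≤ N := by nlinarith
    refine ⟨⟨hk1, by exact_mod_cast hkN⟩, ?_⟩
    rw [abs_sub_comm, abs_of_nonneg (by rw [sub_nonneg, div_le_one hN]; exact hkN),
      one_sub_div hN.ne', le_div_iff₀ hN]
    linarith

theorem eventually_floor_one_sub_mul_add_le {ε : ℝ} (hε : 0 < ε) (c : ℕ) :
    ∀ᶠ N : ℕ in atTop, ⌊(1 - ε) * N⌋₊ + c ≤ N := by
  filter_upwards [(tendsto_natCast_atTop_atTop.const_mul_atTop hε).eventually_ge_atTop (c : ℝ),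
    eventually_ge_atTop c] with N hεN hcN
  have : ⌊(1 - ε) * N⌋₊ ≤ N - c :=
    Nat.floor_le_of_le (by rw [Nat.cast_sub hcN]; linarith)
  omega

theorem height_lln_rho_ge_one (ρ : ℝ) (hρ : 1 ≤ ρ) :
    ∀ ε > (0 : ℝ),
      Tendsto
        (fun N : ℕ =>
          ∑ k ∈ (Finset.Icc 1 N).filter (fun k : ℕ => ε ≤ |(k : ℝ) / N - 1|), pmfP ρ N k)
        atTop (𝓝 0) := by
  intro ε hε
  have hbound : ∀ᶠ N : ℕ in atTop,
      ∑ k ∈ (Icc 1 N).filter (fun k : ℕ => ε ≤ |(k : ℝ) / N - 1|), pmfP ρ N k ∈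
        Set.Icc (0 : ℝ) (3 / (N - 1 : ℕ)) := by
    filter_upwards [eventually_floor_one_sub_mul_add_le hε 3] with N hN
    rw [filter_le_abs_div_sub_one_eq_Icc hε.le]
    exact sum_Icc_pmfP_mem_Icc hρ hN
  exact squeeze_zero' (hbound.mono fun _ h => h.1) (hbound.mono fun _ h => h.2)
    ((tendsto_const_div_atTop_nhds_zero_nat 3).comp (tendsto_sub_atTop_nat 1))
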